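/- arXiv:math/0409360 — 5 statements merged into one kernel-verified Lean document; each statement's English description precedes it below -/
import Mathlib

section
/- For every prime P of a nonzero tensor triangulated category K, there exists a prime P' ⊆ P that is minimal among primes under inclusion. -/
open CategoryTheory CategoryTheory.Limits CategoryTheory.Pretriangulated
open CategoryTheory.MonoidalCategory
open ZeroObject

universe v u

variable (C : Type u) [Category.{v} C] [Preadditive C] [HasZeroObject C]
  [HasShift C ℤ] [∀ n : ℤ, (shiftFunctor C n).Additive] [Pretriangulated C]
  [HasBinaryBiproducts C] [MonoidalCategory C] [SymmetricCategory C]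

/-- A thick tensor-ideal: a class of objects closed under isomorphism, containing 0,
satisfying two-out-of-three for distinguished triangles, closed under direct summands,
and closed under tensoring (on either side) with arbitrary objects. -/
structure IsThickTensorIdeal (J : Set C) : Prop where
  iso_closed : ∀ {a b : C}, (a ≅ b) → a ∈ J → b ∈ J
  zero_mem : (0 : C) ∈ J
  tri₃ : ∀ T : Triangle C, T ∈ (distTriang C) → T.obj₁ ∈ J → T.obj₂ ∈ J → T.obj₃ ∈ J
  tri₂ : ∀ T : Triangle C, T ∈ (distTriang C) → T.obj₁ ∈ J → T.obj₃ ∈ J → T.obj₂ ∈ J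
  tri₁ : ∀ T : Triangle C, T ∈ (distTriang C) → T.obj₂ ∈ J → T.obj₃ ∈ J → T.obj₁ ∈ J
  thick : ∀ a b : C, (a ⊞ b) ∈ J → a ∈ J ∧ b ∈ J
  ideal_right : ∀ a b : C, a ∈ J → a ⊗ b ∈ J
  ideal_left : ∀ a b : C, a ∈ J → b ⊗ a ∈ J

/-- A prime thick tensor-ideal. -/
structure IsPrimeIdeal (P : Set C) extends IsThickTensorIdeal C P : Prop where
  proper : P ≠ Set.univ
  prime : ∀ a b : C, a ⊗ b ∈ P → a ∈ P ∨ b ∈ P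

/-- The Balmer spectrum: the set of prime thick tensor-ideals. -/
def SpcK : Type _ := {P : Set C // IsPrimeIdeal C P}

/-- The support of an object. -/
def suppK (a : C) : Set (SpcK C) := {P | a ∉ P.1}

/-- The Zariski topology, generated by the basic open sets U(a) = {P | a ∈ P}. -/
instance : TopologicalSpace (SpcK C) :=
  TopologicalSpace.generateFrom {U | ∃ a : C, U = {P : SpcK C | a ∈ P.1}}

/-- A tensor-multiplicative collection of objects. -/
def IsMult (S : Set C) : Prop := 𝟙_ C ∈ S ∧ ∀ a ∈ S, ∀ b ∈ S, a ⊗ b ∈ S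

/-- The smallest thick tensor-ideal containing `E`. -/
def genIdeal (E : Set C) : Set C := ⋂₀ {J : Set C | IsThickTensorIdeal C J ∧ E ⊆ J}

/-- The n-fold tensor power of an object (with `tpow a 1 = a`). -/
def tpow (a : C) : ℕ → C
  | 0 => 𝟙_ C
  | 1 => a
  | n+2 => tpow a (n+1) ⊗ a

/-- Proposition 2.11: every prime contains a minimal prime. -/
theorem exists_minimal_prime (hK : ∃ a : C, ¬ IsZero a) (P : SpcK C) :
    ∃ P' : SpcK C, P'.1 ⊆ P.1 ∧ ∀ Q : SpcK C, Q.1 ⊆ P'.1 → Q = P' := by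
  classical
  set S : Set (Set C) := {Q | IsPrimeIdeal C Q ∧ Q ⊆ P.1} with hS
  have Hc : ∀ c ⊆ S, IsChain (· ⊆ ·) c → c.Nonempty →
      ∃ lb ∈ S, ∀ s ∈ c, lb ⊆ s := by
    intro c hcS hchain hne
    refine ⟨⋂₀ c, ⟨?_, ?_⟩, fun s hs => Set.sInter_subset_of_mem hs⟩
    · obtain ⟨Q0, hQ0⟩ := hne
      have hQ0P := (hcS hQ0).1
      constructor
      · constructor
        · intro a b e ha t ht
          exact (hcS ht).1.iso_closed e (ha t ht)
        · intro t ht; exact (hcS ht).1.zero_mem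
        · intro T hT h1 h2 t ht
          exact (hcS ht).1.tri₃ T hT (h1 t ht) (h2 t ht)
        · intro T hT h1 h2 t ht
          exact (hcS ht).1.tri₂ T hT (h1 t ht) (h2 t ht)
        · intro T hT h1 h2 t ht
          exact (hcS ht).1.tri₁ T hT (h1 t ht) (h2 t ht)
        · intro a b h
          exact ⟨fun t ht => ((hcS ht).1.thick a b (h t ht)).1,
                 fun t ht => ((hcS ht).1.thick a b (h t ht)).2⟩
        · intro a b h t ht; exact (hcS ht).1.ideal_right a b (h t ht)
        · intro a b h t ht; exact (hcS ht).1.ideal_left a b (h t ht)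
      · -- proper
        · intro h
          have : Q0 = Set.univ :=
            Set.eq_univ_of_univ_subset (h ▸ Set.sInter_subset_of_mem hQ0)
          exact hQ0P.proper this
      · -- prime
        intro a b hab
        by_contra hcon
        push_neg at hcon
        obtain ⟨ha, hb⟩ := hcon
        simp only [Set.mem_sInter, not_forall] at ha hb
        obtain ⟨Q1, hQ1, ha1⟩ := ha
        obtain ⟨Q2, hQ2, hb2⟩ := hb
        rcases hchain.total hQ1 hQ2 with h12 | h21
        · rcases (hcS hQ1).1.prime a b (hab Q1 hQ1) with h | h
          · exact ha1 h
          · exact hb2 (h12 h)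
        · rcases (hcS hQ2).1.prime a b (hab Q2 hQ2) with h | h
          · exact ha1 (h21 h)
          · exact hb2 h
    · obtain ⟨Q0, hQ0⟩ := hne
      exact (Set.sInter_subset_of_mem hQ0).trans (hcS hQ0).2
  obtain ⟨m, hmP, hmS, hmin⟩ := zorn_superset_nonempty S Hc P.1 ⟨P.2, subset_rfl⟩
  refine ⟨⟨m, hmS.1⟩, hmP, ?_⟩
  intro Q hQ
  have : Q.1 ∈ S := ⟨Q.2, hQ.trans hmP⟩
  exact Subtype.ext (subset_antisymm hQ (hmin this hQ))
end

section
/- Every nonempty Zariski-closed subset of Spc(K) contains a closed point. -/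
open CategoryTheory CategoryTheory.Limits CategoryTheory.Pretriangulated
open CategoryTheory.MonoidalCategory
open ZeroObject

universe v u

variable (C : Type u) [Category.{v} C] [Preadditive C] [HasZeroObject C]
  [HasShift C ℤ] [∀ n : ℤ, (shiftFunctor C n).Additive] [Pretriangulated C]
  [HasBinaryBiproducts C] [MonoidalCategory C] [SymmetricCategory C]

/-! In the Zariski topology `P ⤳ Q` holds exactly when `Q ⊆ P`, so closed sets are stable under
passing to smaller primes and closed points are the minimal primes. The intersection of a nonempty
chain of primes is again prime, so Zorn's lemma gives a minimal prime inside any nonempty closed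
set. -/

namespace IsThickTensorIdeal

variable {C}
omit [SymmetricCategory C]

lemma sInter {c : Set (Set C)} (hc : ∀ J ∈ c, IsThickTensorIdeal C J) :
    IsThickTensorIdeal C (⋂₀ c) where
  iso_closed e ha := Set.mem_sInter.2 fun J hJ => (hc J hJ).iso_closed e (ha J hJ)
  zero_mem := Set.mem_sInter.2 fun J hJ => (hc J hJ).zero_mem
  tri₃ T hT h₁ h₂ := Set.mem_sInter.2 fun J hJ => (hc J hJ).tri₃ T hT (h₁ J hJ) (h₂ J hJ)
  tri₂ T hT h₁ h₃ := Set.mem_sInter.2 fun J hJ => (hc J hJ).tri₂ T hT (h₁ J hJ) (h₃ J hJ)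
  tri₁ T hT h₂ h₃ := Set.mem_sInter.2 fun J hJ => (hc J hJ).tri₁ T hT (h₂ J hJ) (h₃ J hJ)
  thick a b h := ⟨Set.mem_sInter.2 fun J hJ => ((hc J hJ).thick a b (h J hJ)).1,
    Set.mem_sInter.2 fun J hJ => ((hc J hJ).thick a b (h J hJ)).2⟩
  ideal_right a b h := Set.mem_sInter.2 fun J hJ => (hc J hJ).ideal_right a b (h J hJ)
  ideal_left a b h := Set.mem_sInter.2 fun J hJ => (hc J hJ).ideal_left a b (h J hJ)

end IsThickTensorIdeal

namespace IsPrimeIdeal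

variable {C}
omit [SymmetricCategory C]

lemma unit_not_mem {P : Set C} (hP : IsPrimeIdeal C P) : 𝟙_ C ∉ P := fun h =>
  hP.proper <| Set.eq_univ_of_forall fun b => hP.iso_closed (ρ_ b) (hP.ideal_left _ _ h)

lemma sInter_of_isChain {c : Set (Set C)} (hc : IsChain (· ⊆ ·) c) (hne : c.Nonempty)
    (hprime : ∀ J ∈ c, IsPrimeIdeal C J) : IsPrimeIdeal C (⋂₀ c) where
  toIsThickTensorIdeal := IsThickTensorIdeal.sInter fun J hJ => (hprime J hJ).1
  proper h := by
    obtain ⟨J, hJ⟩ := hne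
    exact (hprime J hJ).unit_not_mem ((h ▸ Set.mem_univ _ : 𝟙_ C ∈ ⋂₀ c) J hJ)
  prime a b hab := by
    by_contra! h
    obtain ⟨⟨J₁, hJ₁, ha⟩, ⟨J₂, hJ₂, hb⟩⟩ :
        (∃ J ∈ c, a ∉ J) ∧ ∃ J ∈ c, b ∉ J := by
      simpa only [Set.mem_sInter, not_forall, exists_prop] using h
    -- Both `a` and `b` avoid the smaller of the two primes, which contains `a ⊗ b`.
    rcases hc.total hJ₁ hJ₂ with h₁₂ | h₂₁
    · exact ((hprime J₁ hJ₁).prime a b (hab J₁ hJ₁)).elim ha fun hb₁ => hb (h₁₂ hb₁)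
    · exact ((hprime J₂ hJ₂).prime a b (hab J₂ hJ₂)).elim (fun ha₂ => ha (h₂₁ ha₂)) hb

end IsPrimeIdeal

lemma specializes_generateFrom_iff {X : Type*} {g : Set (Set X)} {x y : X} :
    letI := TopologicalSpace.generateFrom g
    x ⤳ y ↔ ∀ s ∈ g, y ∈ s → x ∈ s := by
  let := TopologicalSpace.generateFrom g
  rw [Specializes, ← Filter.tendsto_id', TopologicalSpace.tendsto_nhds_generateFrom_iff]
  exact forall₂_congr fun s hs => imp_congr_right fun _ =>
    (TopologicalSpace.isOpen_generateFrom_of_mem hs).mem_nhds_iff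

namespace SpcK

variable {C}
omit [SymmetricCategory C]

instance : PartialOrder (SpcK C) := PartialOrder.lift Subtype.val Subtype.val_injective

lemma specializes_iff {P Q : SpcK C} : P ⤳ Q ↔ Q ≤ P :=
  specializes_generateFrom_iff.trans
    ⟨fun h a ha => h _ ⟨a, rfl⟩ ha, by rintro h _ ⟨a, rfl⟩; exact @h a⟩

lemma isLowerSet_of_isClosed {Z : Set (SpcK C)} (hZ : IsClosed Z) : IsLowerSet Z :=
  fun _ _ hQP hP => (specializes_iff.2 hQP).mem_closed hZ hP

lemma isClosed_singleton_of_isMin {P : SpcK C} (hP : IsMin P) : IsClosed ({P} : Set (SpcK C)) :=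
  closure_subset_iff_isClosed.1 fun Q hQ =>
    have hQP : Q ≤ P := specializes_iff.1 (specializes_iff_mem_closure.2 hQ)
    le_antisymm hQP (hP hQP)

lemma exists_le_of_isChain {c : Set (SpcK C)} (hc : IsChain (· ≤ ·) c) (hne : c.Nonempty) :
    ∃ P : SpcK C, ∀ Q ∈ c, P ≤ Q := by
  have hprime := IsPrimeIdeal.sInter_of_isChain
    (hc.image_of_map_rel (· ≤ ·) (· ⊆ ·) Subtype.val fun _ _ => id) (hne.image _)
    (by rintro _ ⟨Q, -, rfl⟩; exact Q.2)
  exact ⟨⟨_, hprime⟩, fun Q hQ => Set.sInter_subset_of_mem ⟨Q, hQ, rfl⟩⟩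

lemma exists_isMin_mem_of_isClosed {Z : Set (SpcK C)} (hZ : IsClosed Z) (hne : Z.Nonempty) :
    ∃ P ∈ Z, IsMin P := by
  obtain ⟨P₀, hP₀⟩ := hne
  obtain ⟨P, -, hPZ, hmin⟩ := zorn_le_nonempty₀ (α := (SpcK C)ᵒᵈ) Z
    (fun c hcZ hc Q hQ => by
      obtain ⟨P, hP⟩ := exists_le_of_isChain hc.symm ⟨Q, hQ⟩
      exact ⟨P, isLowerSet_of_isClosed hZ (hP Q hQ) (hcZ hQ), hP⟩) P₀ hP₀
  exact ⟨P, hPZ, fun Q hQP => hmin (isLowerSet_of_isClosed hZ hQP hPZ) hQP⟩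

end SpcK

theorem closed_subset_has_closed_point
    (Z : Set (SpcK C)) (hZ : IsClosed Z) (hne : Z.Nonempty) :
    ∃ P ∈ Z, IsClosed ({P} : Set (SpcK C)) := by
  obtain ⟨P, hPZ, hP⟩ := SpcK.exists_isMin_mem_of_isClosed hZ hne
  exact ⟨P, hPZ, SpcK.isClosed_singleton_of_isMin hP⟩
end

section
/- For any object a of K, the open set U(a) = Spc(K) ∖ supp(a) is quasi-compact. Conversely, every quasi-compact open subset of Spc(K) equals U(a) for some object a. -/
open CategoryTheory CategoryTheory.Limits CategoryTheory.Pretriangulated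
open CategoryTheory.MonoidalCategory
open ZeroObject

universe v u

variable (C : Type u) [Category.{v} C] [Preadditive C] [HasZeroObject C]
  [HasShift C ℤ] [∀ n : ℤ, (shiftFunctor C n).Additive] [Pretriangulated C]
  [HasBinaryBiproducts C] [MonoidalCategory C] [SymmetricCategory C]

section BalmerAux

variable {C}

lemma aux_one_not_mem {P : Set C} (hP : IsPrimeIdeal C P) : 𝟙_ C ∉ P := by
  intro h
  exact hP.proper (Set.eq_univ_of_forall fun c =>
    hP.iso_closed (λ_ c) (hP.ideal_right _ c h))

lemma aux_biprod_mem {P : Set C} (hP : IsThickTensorIdeal C P) {a b : C}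
    (ha : a ∈ P) (hb : b ∈ P) : (a ⊞ b) ∈ P :=
  hP.tri₂ _ (binaryBiproductTriangle_distinguished a b) ha hb

lemma aux_U_inter (a b : C) :
    {P : SpcK C | a ∈ P.1} ∩ {P : SpcK C | b ∈ P.1} = {P : SpcK C | (a ⊞ b) ∈ P.1} := by
  ext P
  exact ⟨fun h => aux_biprod_mem P.2.toIsThickTensorIdeal h.1 h.2,
    fun h => P.2.thick a b h⟩

lemma aux_U_union (a b : C) :
    {P : SpcK C | a ∈ P.1} ∪ {P : SpcK C | b ∈ P.1} = {P : SpcK C | a ⊗ b ∈ P.1} := by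
  ext P
  constructor
  · rintro (h | h)
    · exact P.2.ideal_right a b h
    · exact P.2.ideal_left b a h
  · exact fun h => P.2.prime a b h

lemma aux_U_one : {P : SpcK C | 𝟙_ C ∈ P.1} = (∅ : Set (SpcK C)) :=
  Set.eq_empty_iff_forall_notMem.2 fun P h => aux_one_not_mem P.2 h

lemma aux_isBasis :
    TopologicalSpace.IsTopologicalBasis
      {U : Set (SpcK C) | ∃ a : C, U = {P : SpcK C | a ∈ P.1}} := by
  refine ⟨?_, ?_, rfl⟩
  · rintro _ ⟨a, rfl⟩ _ ⟨b, rfl⟩ P hP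
    refine ⟨_, ⟨a ⊞ b, rfl⟩, ?_, ?_⟩
    · rw [← aux_U_inter]; exact hP
    · rw [← aux_U_inter]
  · apply Set.eq_univ_of_forall
    intro P
    exact ⟨_, ⟨(0 : C), rfl⟩, P.2.zero_mem⟩

lemma aux_basicOpen_isOpen (a : C) : IsOpen {P : SpcK C | a ∈ P.1} :=
  aux_isBasis.isOpen ⟨a, rfl⟩

lemma aux_finite_subcover {a : C} {ι : Type u} (b : ι → C)
    (hcov : {P : SpcK C | a ∈ P.1} ⊆ ⋃ i, {P : SpcK C | b i ∈ P.1}) :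
    ∃ t : Finset ι, {P : SpcK C | a ∈ P.1} ⊆ ⋃ i ∈ t, {P : SpcK C | b i ∈ P.1} := by
  classical
  by_contra hno
  push_neg at hno
  have hch : ∀ t : Finset ι, ∃ P : SpcK C, a ∈ P.1 ∧ ∀ i ∈ t, b i ∉ P.1 := by
    intro t
    obtain ⟨P, hPa, hP⟩ := Set.not_subset.1 (hno t)
    exact ⟨P, hPa, fun i hi hbi => hP (Set.mem_biUnion hi hbi)⟩
  choose f hfa hfb using hch
  let 𝒰 : Ultrafilter (Finset ι) := Ultrafilter.of Filter.atTop
  have h𝒰 : (𝒰 : Filter (Finset ι)) ≤ Filter.atTop := Ultrafilter.of_le _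
  let Q : Set C := {c | ∀ᶠ t in (𝒰 : Filter (Finset ι)), c ∈ (f t).1}
  have hQm : ∀ {x : C}, x ∈ Q ↔ ∀ᶠ t in (𝒰 : Filter (Finset ι)), x ∈ (f t).1 :=
    fun {x} => Iff.rfl
  have hQI : IsThickTensorIdeal C Q :=
    { iso_closed := fun {x y} e hx => (hQm.1 hx).mono fun t ht => (f t).2.iso_closed e ht
      zero_mem := Filter.Eventually.of_forall fun t => (f t).2.zero_mem
      tri₃ := fun T hT h1 h2 => ((hQm.1 h1).and (hQm.1 h2)).mono
        fun t ht => (f t).2.tri₃ T hT ht.1 ht.2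
      tri₂ := fun T hT h1 h3 => ((hQm.1 h1).and (hQm.1 h3)).mono
        fun t ht => (f t).2.tri₂ T hT ht.1 ht.2
      tri₁ := fun T hT h2 h3 => ((hQm.1 h2).and (hQm.1 h3)).mono
        fun t ht => (f t).2.tri₁ T hT ht.1 ht.2
      thick := fun x y h => ⟨(hQm.1 h).mono fun t ht => ((f t).2.thick x y ht).1,
        (hQm.1 h).mono fun t ht => ((f t).2.thick x y ht).2⟩
      ideal_right := fun x y h => (hQm.1 h).mono fun t ht => (f t).2.ideal_right x y ht
      ideal_left := fun x y h => (hQm.1 h).mono fun t ht => (f t).2.ideal_left x y ht }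
  have hQone : 𝟙_ C ∉ Q := by
    intro h
    obtain ⟨t, ht⟩ := (hQm.1 h).exists
    exact aux_one_not_mem (f t).2 ht
  have hQ : IsPrimeIdeal C Q :=
    { toIsThickTensorIdeal := hQI
      proper := fun h => hQone (h ▸ Set.mem_univ _)
      prime := fun x y h => by
        have h' : {t : Finset ι | x ∈ (f t).1} ∪ {t : Finset ι | y ∈ (f t).1}
            ∈ (𝒰 : Filter (Finset ι)) :=
          Filter.mem_of_superset (hQm.1 h) (fun t ht => (f t).2.prime x y ht)
        exact Ultrafilter.union_mem_iff.1 h' }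
  have haQ : a ∈ Q := Filter.Eventually.of_forall hfa
  obtain ⟨i, hi⟩ := Set.mem_iUnion.1 (hcov (show (⟨Q, hQ⟩ : SpcK C) ∈ _ from haQ))
  have h1 : {t : Finset ι | b i ∈ (f t).1} ∈ (𝒰 : Filter (Finset ι)) := hQm.1 hi
  have h2 : {t : Finset ι | i ∈ t} ∈ (Filter.atTop : Filter (Finset ι)) :=
    Filter.mem_of_superset (Filter.mem_atTop ({i} : Finset ι))
      (fun t ht => Finset.singleton_subset_iff.1 ht)
  obtain ⟨t, ht⟩ := Filter.nonempty_of_mem (Filter.inter_mem h1 (h𝒰 h2))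
  exact hfb t i ht.2 ht.1

end BalmerAux

/-- Proposition 2.14: each U(a) is quasi-compact, and every quasi-compact open
subset of the spectrum is of this form. -/
theorem U_quasicompact :
    (∀ a : C, IsCompact {P : SpcK C | a ∈ P.1}) ∧
    (∀ V : Set (SpcK C), IsOpen V → IsCompact V →
      ∃ a : C, V = {P : SpcK C | a ∈ P.1}) := by
  constructor
  · intro a
    apply isCompact_of_finite_subcover
    intro ι U hUopen hcov
    have hsel : ∀ P : {P : SpcK C // a ∈ P.1}, ∃ (c : C) (i : ι),
        (P : SpcK C) ∈ {Q : SpcK C | c ∈ Q.1} ∧ {Q : SpcK C | c ∈ Q.1} ⊆ U i := by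
      intro P
      obtain ⟨i, hi⟩ := Set.mem_iUnion.1 (hcov P.2)
      obtain ⟨W, ⟨c, rfl⟩, hPW, hWU⟩ := aux_isBasis.exists_subset_of_mem_open hi (hUopen i)
      exact ⟨c, i, hPW, hWU⟩
    choose c idx hc hsub using hsel
    have hcov' : {P : SpcK C | a ∈ P.1} ⊆
        ⋃ P : {P : SpcK C // a ∈ P.1}, {Q : SpcK C | c P ∈ Q.1} :=
      fun P hP => Set.mem_iUnion.2 ⟨⟨P, hP⟩, hc ⟨P, hP⟩⟩
    obtain ⟨t, ht⟩ := aux_finite_subcover _ hcov'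
    classical
    refine ⟨t.image idx, ht.trans ?_⟩
    intro Q hQ
    obtain ⟨p, hpt, hp⟩ := Set.mem_iUnion₂.1 hQ
    exact Set.mem_iUnion₂.2 ⟨idx p, Finset.mem_image_of_mem idx hpt, hsub p hp⟩
  · intro V hVopen hVcomp
    have hsel : ∀ P : {P : SpcK C // P ∈ V}, ∃ c : C,
        (P : SpcK C) ∈ {Q : SpcK C | c ∈ Q.1} ∧ {Q : SpcK C | c ∈ Q.1} ⊆ V := by
      intro P
      obtain ⟨W, ⟨c, rfl⟩, h1, h2⟩ := aux_isBasis.exists_subset_of_mem_open P.2 hVopen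
      exact ⟨c, h1, h2⟩
    choose c hc hsub using hsel
    obtain ⟨t, ht⟩ := hVcomp.elim_finite_subcover (fun P => {Q : SpcK C | c P ∈ Q.1})
      (fun P => aux_basicOpen_isOpen _) (fun P hP => Set.mem_iUnion.2 ⟨⟨P, hP⟩, hc _⟩)
    classical
    have key : ∀ s : Finset {P : SpcK C // P ∈ V}, ∃ d : C,
        (⋃ p ∈ s, {Q : SpcK C | c p ∈ Q.1}) = {Q : SpcK C | d ∈ Q.1} := by
      intro s
      induction s using Finset.induction with
      | empty =>
        refine ⟨𝟙_ C, ?_⟩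
        rw [aux_U_one]
        simp
      | @insert p s hp ih =>
        obtain ⟨d, hd⟩ := ih
        refine ⟨c p ⊗ d, ?_⟩
        rw [Finset.set_biUnion_insert, hd, aux_U_union]
    obtain ⟨d, hd⟩ := key t
    refine ⟨d, Set.Subset.antisymm (hd ▸ ht) (hd ▸ ?_)⟩
    exact Set.iUnion₂_subset fun p _ => hsub p
end

section
/- The space Spc(K) is noetherian if and only if every Zariski-closed subset of Spc(K) is the support supp(a) of some object a of K. -/
/-!
For an ultrafilter `F` on `Spc(K)`, the objects lying in `F`-almost every prime form again a
prime, and `F` converges to it. Hence every basic open `U(a) = {P | a ∈ P}` is quasi-compact, so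
the quasi-compact opens are exactly the finite unions of basic opens, i.e. (since
`U(a) ∪ U(b) = U(a ⊗ b)`) the basic opens themselves, i.e. the complements of supports.
Noetherianity asks precisely that every open be quasi-compact.
-/

open CategoryTheory CategoryTheory.Limits CategoryTheory.Pretriangulated
open CategoryTheory.MonoidalCategory
open ZeroObject

universe v u

variable (C : Type u) [Category.{v} C] [Preadditive C] [HasZeroObject C]
  [HasShift C ℤ] [∀ n : ℤ, (shiftFunctor C n).Additive] [Pretriangulated C]
  [HasBinaryBiproducts C] [MonoidalCategory C] [SymmetricCategory C]

set_option linter.unusedSectionVars false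

open Filter Topology

namespace SpcK

def basicOpen (a : C) : Set (SpcK C) := {P | a ∈ P.1}

lemma compl_suppK (a : C) : (suppK C a)ᶜ = basicOpen C a :=
  compl_compl _

lemma unit_not_mem (P : SpcK C) : 𝟙_ C ∉ P.1 := fun h =>
  P.2.proper <| Set.eq_univ_of_forall fun c => P.2.iso_closed (λ_ c) (P.2.ideal_right _ c h)

lemma biprod_mem_iff (P : SpcK C) (a b : C) : (a ⊞ b) ∈ P.1 ↔ a ∈ P.1 ∧ b ∈ P.1 :=
  ⟨P.2.thick a b, fun h => P.2.tri₂ _ (binaryBiproductTriangle_distinguished a b) h.1 h.2⟩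

lemma tensor_mem_iff (P : SpcK C) (a b : C) : a ⊗ b ∈ P.1 ↔ a ∈ P.1 ∨ b ∈ P.1 :=
  ⟨P.2.prime a b, fun h => h.elim (P.2.ideal_right a b) (P.2.ideal_left b a)⟩

lemma basicOpen_unit : basicOpen C (𝟙_ C) = ∅ :=
  Set.eq_empty_of_forall_notMem (unit_not_mem C)

lemma basicOpen_tensor (a b : C) : basicOpen C (a ⊗ b) = basicOpen C a ∪ basicOpen C b :=
  Set.ext fun P => tensor_mem_iff C P a b

lemma isTopologicalBasis_basicOpen :
    TopologicalSpace.IsTopologicalBasis (Set.range (basicOpen C)) := by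
  refine ⟨?_, ?_, ?_⟩
  · rintro _ ⟨a, rfl⟩ _ ⟨b, rfl⟩ P hP
    exact ⟨basicOpen C (a ⊞ b), ⟨a ⊞ b, rfl⟩, (biprod_mem_iff C P a b).2 hP,
      fun Q hQ => (biprod_mem_iff C Q a b).1 hQ⟩
  · exact Set.sUnion_eq_univ_iff.2 fun P => ⟨_, ⟨0, rfl⟩, P.2.zero_mem⟩
  · exact congrArg TopologicalSpace.generateFrom (Set.ext fun _ => exists_congr fun _ => eq_comm)

lemma exists_basicOpen_eq_biUnion {s : Set C} (hs : s.Finite) :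
    ∃ c : C, basicOpen C c = ⋃ a ∈ s, basicOpen C a := by
  induction s, hs using Set.Finite.induction_on with
  | empty => exact ⟨𝟙_ C, by simp [basicOpen_unit]⟩
  | @insert a s _ _ ih =>
    obtain ⟨c, hc⟩ := ih
    exact ⟨a ⊗ c, by rw [Set.biUnion_insert, basicOpen_tensor, hc]⟩

lemma isPrimeIdeal_ultrafilterLimit (F : Ultrafilter (SpcK C)) :
    IsPrimeIdeal C {c | ∀ᶠ P : SpcK C in F, c ∈ P.1} where
  iso_closed e h := h.mono fun P hP => P.2.iso_closed e hP
  zero_mem := .of_forall fun P => P.2.zero_mem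
  tri₃ T hT h₁ h₂ := (h₁.and h₂).mono fun P hP => P.2.tri₃ T hT hP.1 hP.2
  tri₂ T hT h₁ h₃ := (h₁.and h₃).mono fun P hP => P.2.tri₂ T hT hP.1 hP.2
  tri₁ T hT h₂ h₃ := (h₂.and h₃).mono fun P hP => P.2.tri₁ T hT hP.1 hP.2
  thick a b h :=
    ⟨h.mono fun P hP => (P.2.thick a b hP).1, h.mono fun P hP => (P.2.thick a b hP).2⟩
  ideal_right a b h := h.mono fun P hP => P.2.ideal_right a b hP
  ideal_left a b h := h.mono fun P hP => P.2.ideal_left a b hP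
  proper h := by
    have hunit : ∀ᶠ P : SpcK C in F, 𝟙_ C ∈ P.1 := Set.eq_univ_iff_forall.1 h (𝟙_ C)
    obtain ⟨P, hP⟩ := hunit.exists
    exact unit_not_mem C P hP
  prime a b h := Ultrafilter.eventually_or.1 (h.mono fun P hP => P.2.prime a b hP)

def ultrafilterLimit (F : Ultrafilter (SpcK C)) : SpcK C :=
  ⟨_, isPrimeIdeal_ultrafilterLimit C F⟩

lemma mem_basicOpen_ultrafilterLimit_iff (F : Ultrafilter (SpcK C)) (a : C) :
    ultrafilterLimit C F ∈ basicOpen C a ↔ basicOpen C a ∈ F :=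
  Iff.rfl

lemma ultrafilter_le_nhds_ultrafilterLimit (F : Ultrafilter (SpcK C)) :
    ↑F ≤ 𝓝 (ultrafilterLimit C F) := by
  rw [TopologicalSpace.nhds_generateFrom]
  refine le_iInf₂ fun U ⟨hU, a, hUa⟩ => le_principal_iff.2 ?_
  subst hUa
  exact (mem_basicOpen_ultrafilterLimit_iff C F a).1 hU

lemma isCompact_basicOpen (a : C) : IsCompact (basicOpen C a) :=
  isCompact_iff_ultrafilter_le_nhds'.2 fun F hF =>
    ⟨ultrafilterLimit C F, (mem_basicOpen_ultrafilterLimit_iff C F a).2 hF,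
      ultrafilter_le_nhds_ultrafilterLimit C F⟩

lemma exists_eq_basicOpen_of_isCompact_of_isOpen {U : Set (SpcK C)} (hc : IsCompact U)
    (ho : IsOpen U) : ∃ a : C, U = basicOpen C a := by
  obtain ⟨s, hs, rfl⟩ := (isCompact_open_iff_eq_finite_iUnion_of_isTopologicalBasis _
    (isTopologicalBasis_basicOpen C) (isCompact_basicOpen C) U).1 ⟨hc, ho⟩
  obtain ⟨c, hc⟩ := exists_basicOpen_eq_biUnion C hs
  exact ⟨c, hc.symm⟩

end SpcK

open SpcK in
/-- Corollary 2.17: the spectrum is noetherian iff every closed subset is the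
support of an object. -/
theorem noetherian_iff_supports :
    TopologicalSpace.NoetherianSpace (SpcK C) ↔
      ∀ Z : Set (SpcK C), IsClosed Z → ∃ a : C, Z = suppK C a := by
  rw [TopologicalSpace.noetherianSpace_iff_opens]
  refine ⟨fun hN Z hZ => ?_, fun H U => ?_⟩
  · obtain ⟨a, ha⟩ :=
      exists_eq_basicOpen_of_isCompact_of_isOpen C (hN ⟨Zᶜ, hZ.isOpen_compl⟩) hZ.isOpen_compl
    exact ⟨a, compl_injective (ha.trans (compl_suppK C a).symm)⟩
  · obtain ⟨a, ha⟩ := H _ U.isOpen.isClosed_compl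
    have hU : (U : Set (SpcK C)) = basicOpen C a := by rw [← compl_suppK, ← ha, compl_compl]
    exact hU ▸ isCompact_basicOpen C a
end

section
/- The pair (Spc(K), supp) is the final support data on K: for any support data (X, σ) on K there exists a unique continuous map f : X → Spc(K) with σ(a) = f^{-1}(supp(a)) for all objects a, given explicitly by f(x) = {a ∈ K : x ∉ σ(a)}. -/
/-!
For a point `x` of a support datum `(X, σ)`, the objects whose support avoids `x` form a prime
thick tensor-ideal: each axiom of a support datum is, pointwise, the contrapositive of a closure
property of a prime. Sending `x` to this prime is continuous since the preimage of the basic open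
`{P | a ∈ P}` is the complement of the closed set `σ a`. Conversely `σ a = f ⁻¹' supp a` says
exactly that `a ∈ f x ↔ x ∉ σ a`, which pins `f` down.
-/

open CategoryTheory CategoryTheory.Limits CategoryTheory.Pretriangulated
open CategoryTheory.MonoidalCategory
open ZeroObject

universe v u w

variable (C : Type u) [Category.{v} C] [Preadditive C] [HasZeroObject C]
  [HasShift C ℤ] [∀ n : ℤ, (shiftFunctor C n).Additive] [Pretriangulated C]
  [HasBinaryBiproducts C] [MonoidalCategory C] [SymmetricCategory C]

/-- A support data on `K`: a topological space `X` together with closed subsets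
`σ a ⊆ X` satisfying the axioms (SD1)-(SD5). -/
structure SupportData (X : Type w) [TopologicalSpace X] : Type (max u w) where
  σ : C → Set X
  closed : ∀ a : C, IsClosed (σ a)
  zero : σ (0 : C) = ∅
  unit : σ (𝟙_ C) = Set.univ
  sum : ∀ a b : C, σ (a ⊞ b) = σ a ∪ σ b
  shift : ∀ a : C, σ (a⟦(1:ℤ)⟧) = σ a
  triangle : ∀ T : Triangle C, T ∈ (distTriang C) → σ T.obj₁ ⊆ σ T.obj₂ ∪ σ T.obj₃
  tensor : ∀ a b : C, σ (a ⊗ b) = σ a ∩ σ b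

section

variable {K : Type u} [Category.{v} K] [Preadditive K] [HasZeroObject K]
  [HasShift K ℤ] [∀ n : ℤ, (shiftFunctor K n).Additive] [Pretriangulated K]
  [HasBinaryBiproducts K] [MonoidalCategory K]

namespace IsThickTensorIdeal

variable {J : Set K}

lemma shift_mem_iff (hJ : IsThickTensorIdeal K J) (a : K) : a⟦(1:ℤ)⟧ ∈ J ↔ a ∈ J := by
  have hT := rot_of_distTriang _ (contractible_distinguished a)
  exact ⟨fun h => hJ.tri₁ _ hT hJ.zero_mem h, fun h => hJ.tri₃ _ hT h hJ.zero_mem⟩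

lemma biprod_mem_iff (hJ : IsThickTensorIdeal K J) (a b : K) : (a ⊞ b) ∈ J ↔ a ∈ J ∧ b ∈ J :=
  ⟨hJ.thick a b, fun h => hJ.tri₂ _ (binaryBiproductTriangle_distinguished a b) h.1 h.2⟩

lemma eq_univ_of_unit_mem (hJ : IsThickTensorIdeal K J) (h : 𝟙_ K ∈ J) : J = Set.univ :=
  Set.eq_univ_of_forall fun b => hJ.iso_closed (ρ_ b) (hJ.ideal_left _ b h)

end IsThickTensorIdeal

lemma IsPrimeIdeal.tensor_mem_iff {P : Set K} (hP : IsPrimeIdeal K P) (a b : K) :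
    a ⊗ b ∈ P ↔ a ∈ P ∨ b ∈ P :=
  ⟨hP.prime a b, fun h => h.elim (hP.ideal_right a b) (hP.ideal_left b a)⟩

lemma isOpen_setOf_mem_spc (a : K) : IsOpen {P : SpcK K | a ∈ P.1} :=
  TopologicalSpace.isOpen_generateFrom_of_mem ⟨a, rfl⟩

lemma isClosed_suppK (a : K) : IsClosed (suppK K a) :=
  (isOpen_setOf_mem_spc a).isClosed_compl

lemma suppK_zero : suppK K (0 : K) = ∅ :=
  Set.eq_empty_of_forall_notMem fun P h => h P.2.zero_mem

lemma suppK_unit : suppK K (𝟙_ K) = Set.univ :=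
  Set.eq_univ_of_forall fun P h => P.2.proper (P.2.eq_univ_of_unit_mem h)

lemma suppK_biprod (a b : K) : suppK K (a ⊞ b) = suppK K a ∪ suppK K b :=
  Set.ext fun P => (not_congr (P.2.biprod_mem_iff a b)).trans not_and_or

lemma suppK_shift (a : K) : suppK K (a⟦(1:ℤ)⟧) = suppK K a :=
  Set.ext fun P => not_congr (P.2.shift_mem_iff a)

lemma suppK_triangle (T : Triangle K) (hT : T ∈ distTriang K) :
    suppK K T.obj₁ ⊆ suppK K T.obj₂ ∪ suppK K T.obj₃ := fun P hP => by
  by_contra h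
  obtain ⟨h₂, h₃⟩ := not_or.1 h
  exact hP (P.2.tri₁ T hT (not_not.1 h₂) (not_not.1 h₃))

lemma suppK_tensor (a b : K) : suppK K (a ⊗ b) = suppK K a ∩ suppK K b :=
  Set.ext fun P => (not_congr (P.2.tensor_mem_iff a b)).trans not_or

namespace SupportData

variable {X : Type w} [TopologicalSpace X] (sd : SupportData K X)

lemma triangle₂ (T : Triangle K) (hT : T ∈ distTriang K) :
    sd.σ T.obj₂ ⊆ sd.σ T.obj₃ ∪ sd.σ T.obj₁ := by
  simpa [Triangle.rotate, sd.shift] using sd.triangle T.rotate (rot_of_distTriang T hT)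

lemma triangle₃ (T : Triangle K) (hT : T ∈ distTriang K) :
    sd.σ T.obj₃ ⊆ sd.σ T.obj₁ ∪ sd.σ T.obj₂ := by
  simpa [Triangle.rotate, sd.shift] using sd.triangle₂ T.rotate (rot_of_distTriang T hT)

lemma eq_of_iso {a b : K} (e : a ≅ b) : sd.σ a = sd.σ b := by
  have hT : Triangle.mk e.hom (0 : b ⟶ 0) (0 : 0 ⟶ a⟦(1:ℤ)⟧) ∈ distTriang K :=
    (Triangle.distinguished_iff_of_isZero₃ _ (isZero_zero K)).2 (inferInstanceAs (IsIso e.hom))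
  have h₁ := sd.triangle _ hT
  have h₂ := sd.triangle₂ _ hT
  simp only [Triangle.mk_obj₁, Triangle.mk_obj₂, Triangle.mk_obj₃, sd.zero, Set.union_empty,
    Set.empty_union] at h₁ h₂
  exact h₁.antisymm h₂

def vanishingIdeal (x : X) : Set K := {a | x ∉ sd.σ a}

lemma isPrimeIdeal_vanishingIdeal (x : X) : IsPrimeIdeal K (sd.vanishingIdeal x) where
  iso_closed e ha hb := ha ((sd.eq_of_iso e).symm ▸ hb)
  zero_mem := by simp [vanishingIdeal, sd.zero]
  tri₃ T hT h₁ h₂ h₃ := (sd.triangle₃ T hT h₃).elim h₁ h₂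
  tri₂ T hT h₁ h₃ h₂ := (sd.triangle₂ T hT h₂).elim h₃ h₁
  tri₁ T hT h₂ h₃ h₁ := (sd.triangle T hT h₁).elim h₂ h₃
  thick a b h := not_or.1 fun hab => h (sd.sum a b ▸ hab)
  ideal_right a b ha h := ha (sd.tensor a b ▸ h).1
  ideal_left a b ha h := ha (sd.tensor b a ▸ h).2
  proper h := (h ▸ Set.mem_univ (𝟙_ K) : 𝟙_ K ∈ sd.vanishingIdeal x) (sd.unit ▸ Set.mem_univ x)
  prime a b h := not_and_or.1 fun hab => h (sd.tensor a b ▸ hab)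

def toSpc (x : X) : SpcK K := ⟨sd.vanishingIdeal x, sd.isPrimeIdeal_vanishingIdeal x⟩

lemma preimage_toSpc_suppK (a : K) : sd.toSpc ⁻¹' suppK K a = sd.σ a :=
  Set.ext fun _ => not_not

lemma continuous_toSpc : Continuous sd.toSpc := by
  refine continuous_generateFrom_iff.2 ?_
  rintro _ ⟨a, rfl⟩
  exact (sd.closed a).isOpen_compl

variable {sd}

lemma mem_iff_of_preimage_suppK {f : X → SpcK K} (hf : ∀ a : K, sd.σ a = f ⁻¹' suppK K a)
    (x : X) (a : K) : a ∈ (f x).1 ↔ x ∉ sd.σ a := by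
  rw [hf a]
  exact not_not.symm

lemma eq_toSpc_of_preimage_suppK {f : X → SpcK K} (hf : ∀ a : K, sd.σ a = f ⁻¹' suppK K a) :
    f = sd.toSpc :=
  funext fun x => Subtype.ext <| Set.ext fun a => mem_iff_of_preimage_suppK hf x a

end SupportData

end

/-- Theorem 3.2: (Spc K, supp) is the final support data on K. -/
theorem spc_final_support_data :
    ((∀ a : C, IsClosed (suppK C a)) ∧
      suppK C (0 : C) = ∅ ∧
      suppK C (𝟙_ C) = Set.univ ∧
      (∀ a b : C, suppK C (a ⊞ b) = suppK C a ∪ suppK C b) ∧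
      (∀ a : C, suppK C (a⟦(1:ℤ)⟧) = suppK C a) ∧
      (∀ T : Triangle C, T ∈ (distTriang C) →
        suppK C T.obj₁ ⊆ suppK C T.obj₂ ∪ suppK C T.obj₃) ∧
      (∀ a b : C, suppK C (a ⊗ b) = suppK C a ∩ suppK C b)) ∧
    (∀ (X : Type w) [TopologicalSpace X] (sd : SupportData C X),
      (∃! f : X → SpcK C,
        Continuous f ∧ ∀ a : C, sd.σ a = f ⁻¹' suppK C a) ∧
      (∀ f : X → SpcK C,
        (Continuous f ∧ ∀ a : C, sd.σ a = f ⁻¹' suppK C a) →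
        ∀ (x : X) (a : C), a ∈ (f x).1 ↔ x ∉ sd.σ a)) := by
  refine ⟨⟨isClosed_suppK, suppK_zero, suppK_unit, suppK_biprod, suppK_shift, suppK_triangle,
    suppK_tensor⟩, fun X _ sd => ⟨?_, fun f hf => SupportData.mem_iff_of_preimage_suppK hf.2⟩⟩
  exact ⟨sd.toSpc, ⟨sd.continuous_toSpc, fun a => (sd.preimage_toSpc_suppK a).symm⟩,
    fun f hf => SupportData.eq_toSpc_of_preimage_suppK hf.2⟩
end
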